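/- Let n, k ≥ 1 be integers, h : Fin n → Fin k a function, i ∈ Fin n and R > 2 a real, and let d be the metric on Fin n with d(p,q) = R when h(p) ≠ h(q), d(p,q) = 2R when p ≠ q, h(p) = h(q) and i ∈ {p,q}, and d(p,q) = 1 when p ≠ q, h(p) = h(q) and i ∉ {p,q}. If every fiber h⁻¹(t), t ∈ Fin k, has at least 2 elements, then for every nonempty set C ⊆ Fin n with |C| ≤ k we have max_{p ∈ Fin n} min_{c ∈ C} d(p,c) ≥ R. Moreover, for the metric d₀ on Fin n defined by d₀(p,q) = 1 when p ≠ q and h(p) = h(q), and d₀(p,q) = R when h(p) ≠ h(q), there exists a set C of at most k points with max_{p ∈ Fin n} min_{c ∈ C} d₀(p,c) ≤ 1. -/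

import Mathlib

/-- The hard-instance distance function `D(h,i)`: `d(p,p) = 0`; for `p ≠ q`,
`d(p,q) = R` if `h(p) ≠ h(q)`, `d(p,q) = 2R` if `h(p) = h(q)` and `i ∈ {p,q}`,
and `d(p,q) = 1` if `h(p) = h(q)` and `i ∉ {p,q}`. -/
noncomputable def hardDist {n k : ℕ} (h : Fin n → Fin k) (i : Fin n) (R : ℝ)
    (p q : Fin n) : ℝ :=
  if p = q then 0
  else if h p ≠ h q then R
  else if i = p ∨ i = q then 2 * R
  else 1

/-- The hard-instance distance function `D(h)`: `d₀(p,p) = 0`; for `p ≠ q`,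
`d₀(p,q) = 1` if `h(p) = h(q)` and `d₀(p,q) = R` otherwise. -/
noncomputable def hardDist0 {n k : ℕ} (h : Fin n → Fin k) (R : ℝ)
    (p q : Fin n) : ℝ :=
  if p = q then 0
  else if h p = h q then 1
  else R

/-!
Lower bound for `D(h,i)`: if `i` is not a center it is already at distance `≥ R` from every
center. Otherwise, either some fiber of `h` contains no center, and any of its points is at
distance `R` from all centers, or every fiber is hit, so by counting (`|C| ≤ k`) each fiber
contains exactly one center; the fiber of `i` then contains only the center `i`, and a second
point of that fiber is at distance `2R` from it and `R` from all other centers.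

Upper bound for `D(h)`: one point from each fiber gives `k` centers at distance `≤ 1`
from every point.
-/

open Finset

lemma exists_ne_of_two_le_card_fiber {α β : Type*} [Fintype α] [DecidableEq β] {f : α → β}
    {b : β} (hb : 2 ≤ #{a | f a = b}) (a₀ : α) : ∃ a, f a = b ∧ a ≠ a₀ := by
  obtain ⟨a, ha, hne⟩ := exists_mem_ne hb a₀
  exact ⟨a, (mem_filter.mp ha).2, hne⟩

section HardInstances

variable {n k : ℕ} {h : Fin n → Fin k} {i : Fin n} {R : ℝ}

lemma le_hardDist {p q : Fin n} (hR : 0 ≤ R) (hpq : h p = h q → p ≠ q ∧ (i = p ∨ i = q)) :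
    R ≤ hardDist h i R p q := by
  by_cases hfib : h p = h q
  · obtain ⟨hne, hi⟩ := hpq hfib
    simp only [hardDist, hne, hfib, hi, ne_eq, not_true_eq_false, if_false, if_true]
    linarith
  · have hne : p ≠ q := fun hpq => hfib (congrArg h hpq)
    simp [hardDist, hne, hfib]

lemma hardDist0_le_one {p q : Fin n} (hpq : h p = h q) : hardDist0 h R p q ≤ 1 := by
  unfold hardDist0
  split_ifs <;> norm_num

lemma exists_far_from_centers (hfib : ∀ t : Fin k, 2 ≤ #{p | h p = t}) (C : Finset (Fin n))
    (hC : #C ≤ k) : ∃ p, ∀ c ∈ C, h p = h c → p ≠ c ∧ (i = p ∨ i = c) := by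
  by_cases hiC : i ∈ C
  swap
  · exact ⟨i, fun c hc _ => ⟨fun hic => hiC (hic ▸ hc), Or.inl rfl⟩⟩
  by_cases hsurj : ∀ t, ∃ c ∈ C, h c = t
  · have hinj : Set.InjOn h C :=
      injOn_of_surjOn_of_card_le (t := univ) h (fun _ _ => mem_coe.mpr (mem_univ _))
        (fun t _ => by simpa using hsurj t) (by simpa using hC)
    obtain ⟨p, hp, hpi⟩ := exists_ne_of_two_le_card_fiber (hfib (h i)) i
    refine ⟨p, fun c hc hpc => ?_⟩
    have hci : c = i := hinj hc hiC (hpc.symm.trans hp)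
    exact ⟨hci ▸ hpi, Or.inr hci.symm⟩
  · push Not at hsurj
    obtain ⟨t, ht⟩ := hsurj
    obtain ⟨p, hp, -⟩ := exists_ne_of_two_le_card_fiber (hfib t) i
    exact ⟨p, fun c hc hpc => absurd (hpc ▸ hp) (ht c hc)⟩

end HardInstances

theorem stmt_10_general (n k : ℕ) (h : Fin n → Fin k)
    (i : Fin n) (R : ℝ) (hR : 2 < R)
    (hfib : ∀ t : Fin k, 2 ≤ (Finset.univ.filter fun p => h p = t).card) :
    (∀ C : Finset (Fin n), C.Nonempty → C.card ≤ k →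
      ∃ p : Fin n, ∀ c ∈ C, R ≤ hardDist h i R p c) ∧
    ∃ C : Finset (Fin n), C.Nonempty ∧ C.card ≤ k ∧
      ∀ p : Fin n, ∃ c ∈ C, hardDist0 h R p c ≤ 1 := by
  have hsurj : Function.Surjective h := fun t =>
    (exists_ne_of_two_le_card_fiber (hfib t) i).imp fun _ hp => hp.1
  refine ⟨fun C _ hC => ?_, ?_⟩
  · obtain ⟨p, hp⟩ := exists_far_from_centers (i := i) hfib C hC
    exact ⟨p, fun c hc => le_hardDist (by linarith) (hp c hc)⟩
  · set r := Function.surjInv hsurj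
    refine ⟨univ.image r, ⟨r (h i), mem_image_of_mem r (mem_univ _)⟩,
      card_image_le.trans_eq (card_fin k), fun p => ⟨r (h p), mem_image_of_mem r (mem_univ _), ?_⟩⟩
    exact hardDist0_le_one (Function.surjInv_eq hsurj (h p)).symm

/-- if every fiber of `h : Fin n → Fin k` has at least two elements and
`R > 2`, then for the metric `D(h,i)` every nonempty set `C` of at most `k` centers
has `k`-center cost at least `R` on `Fin n` (there is a point whose distance to every
center is at least `R`), while for the metric `D(h)` there is a set of at most `k`
centers with `k`-center cost at most `1`. -/
theorem stmt_10 (n k : ℕ) (hn : 1 ≤ n) (hk : 1 ≤ k) (h : Fin n → Fin k)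
    (i : Fin n) (R : ℝ) (hR : 2 < R)
    (hfib : ∀ t : Fin k, 2 ≤ (Finset.univ.filter fun p => h p = t).card) :
    (∀ C : Finset (Fin n), C.Nonempty → C.card ≤ k →
      ∃ p : Fin n, ∀ c ∈ C, R ≤ hardDist h i R p c) ∧
    ∃ C : Finset (Fin n), C.Nonempty ∧ C.card ≤ k ∧
      ∀ p : Fin n, ∃ c ∈ C, hardDist0 h R p c ≤ 1 :=
  stmt_10_general n k h i R hR hfib
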